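/- Let p_1 ≥ p_2 ≥ ... ≥ p_n > 0 be a TS instance and let s be a feasible schedule with makespan T. Then there exist numbers a_1, ..., a_n ∈ {0, 1, 2} with a_1 + ... + a_n = n such that a_1 p_1 + ... + a_n p_n ≤ T. -/

import Mathlib

/-!
Order the jobs by start time. Two consecutive jobs `i`, `j` satisfy
`s j - s i ≥ min (p i) (p j)`, so charging each of the `n - 1` consecutive pairs to its
shorter job and telescoping bounds the total charge by the last start time. Charging the last
job once more bounds everything by the makespan, with `n` charges in all. A job lies in at most
two consecutive pairs and the last job in only one, so no job is charged more than twice.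
-/

/-- A schedule `s` is feasible for the TS instance given by sizes `p 1 ≥ … ≥ p n > 0`:
start times are nonnegative and any two distinct jobs are separated by at least
the smaller of the two sizes. -/
def Feasible (n : ℕ) (p s : ℕ → ℝ) : Prop :=
  (∀ j, 1 ≤ j → j ≤ n → 0 ≤ s j) ∧
  ∀ i j, 1 ≤ i → i ≤ n → 1 ≤ j → j ≤ n → i ≠ j → min (p i) (p j) ≤ |s i - s j|

/-- The makespan of a schedule: `max_j (s j + p j)` over jobs `1 ≤ j ≤ n`. -/
noncomputable def makespan (n : ℕ) (p s : ℕ → ℝ) : ℝ :=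
  sSup ((fun j => s j + p j) '' Set.Icc 1 n)

/-- `OPT`: the infimum of the makespan over all feasible schedules. -/
noncomputable def OPT (n : ℕ) (p : ℕ → ℝ) : ℝ :=
  sInf {T | ∃ s : ℕ → ℝ, Feasible n p s ∧ makespan n p s = T}

open Finset Multiset

section Charging

variable {ι : Type*} [DecidableEq ι]

theorem Multiset.sum_map_eq_sum_count_mul {S : Finset ι} {M : Multiset ι}
    (hM : ∀ j ∈ M, j ∈ S) (p : ι → ℝ) : (M.map p).sum = ∑ j ∈ S, (M.count j : ℝ) * p j := by
  rw [Finset.sum_multiset_map_count M p]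
  simp only [nsmul_eq_mul]
  refine Finset.sum_subset (fun j hj => hM j (Multiset.mem_toFinset.1 hj)) fun j _ hj => ?_
  simp [Multiset.count_eq_zero.2 (fun h => hj (Multiset.mem_toFinset.2 h))]

theorem exists_multiset_card_add_one_eq_sum_map_le {p s : ι → ℝ} {S : Finset ι}
    (hS : S.Nonempty) (hs0 : ∀ j ∈ S, 0 ≤ s j)
    (hsep : (S : Set ι).Pairwise fun i j => min (p i) (p j) ≤ |s i - s j|) :
    ∃ M : Multiset ι, ∃ j₀ ∈ S, (∀ j ∈ M, j ∈ S) ∧ (∀ j, M.count j ≤ 2) ∧ M.count j₀ ≤ 1 ∧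
      card M + 1 = #S ∧ (M.map p).sum ≤ s j₀ := by
  induction S using Finset.induction_on_max_value s with
  | empty => exact absurd hS Finset.not_nonempty_empty
  | insert a T haT hmax ih =>
    rcases T.eq_empty_or_nonempty with rfl | hT
    · exact ⟨0, a, Finset.mem_singleton_self a, by simp, by simp, by simp, by simp,
        by simpa using hs0⟩
    obtain ⟨M, j₁, hj₁, hMT, hcount, hj₁count, hcard, hsum⟩ :=
      ih hT (fun j hj => hs0 j (mem_insert_of_mem hj)) (hsep.mono (by simp))
    have hgap : min (p a) (p j₁) ≤ s a - s j₁ := by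
      have h : min (p a) (p j₁) ≤ |s a - s j₁| :=
        hsep (mem_insert_self a T) (mem_insert_of_mem hj₁) (ne_of_mem_of_not_mem hj₁ haT).symm
      rwa [abs_of_nonneg (sub_nonneg.2 (hmax j₁ hj₁))] at h
    have haM : M.count a = 0 := Multiset.count_eq_zero.2 fun h => haT (hMT a h)
    -- the new consecutive pair `(j₁, a)` is charged to its shorter job `jm`
    let jm := if p a ≤ p j₁ then a else j₁
    have hjm : jm = a ∨ jm = j₁ := by unfold jm; split_ifs <;> simp
    have hpjm : p jm = min (p a) (p j₁) := by unfold jm; split_ifs <;> simp [le_of_not_ge, *]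
    refine ⟨jm ::ₘ M, a, mem_insert_self a T, ?_, fun j => ?_, ?_, ?_, ?_⟩
    · simp only [Multiset.mem_cons, mem_insert]
      rintro j (rfl | hj)
      · rcases hjm with h | h <;> simp [h, hj₁]
      · exact Or.inr (hMT j hj)
    · rw [Multiset.count_cons]
      rcases eq_or_ne j a with rfl | hja
      · split_ifs <;> omega
      rcases eq_or_ne j j₁ with rfl | hjj₁
      · split_ifs <;> omega
      have hjjm : j ≠ jm := by rcases hjm with h | h <;> rw [h] <;> assumption
      rw [if_neg hjjm, add_zero]
      exact hcount j
    · rw [Multiset.count_cons, haM]; split_ifs <;> omega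
    · rw [Multiset.card_cons, card_insert_of_notMem haT]; omega
    · rw [Multiset.map_cons, Multiset.sum_cons, hpjm]; linarith

theorem exists_multiset_card_eq_sum_map_le {p s : ι → ℝ} {S : Finset ι} (hS : S.Nonempty)
    (hs0 : ∀ j ∈ S, 0 ≤ s j)
    (hsep : (S : Set ι).Pairwise fun i j => min (p i) (p j) ≤ |s i - s j|) :
    ∃ M : Multiset ι, (∀ j ∈ M, j ∈ S) ∧ (∀ j, M.count j ≤ 2) ∧ card M = #S ∧
      ∃ j₀ ∈ S, (M.map p).sum ≤ s j₀ + p j₀ := by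
  obtain ⟨M, j₀, hj₀, hMS, hcount, hj₀count, hcard, hsum⟩ :=
    exists_multiset_card_add_one_eq_sum_map_le hS hs0 hsep
  refine ⟨j₀ ::ₘ M, ?_, fun j => ?_, by rw [Multiset.card_cons, hcard], j₀, hj₀, ?_⟩
  · simp only [Multiset.mem_cons]
    rintro j (rfl | hj)
    exacts [hj₀, hMS j hj]
  · rw [Multiset.count_cons]
    rcases eq_or_ne j j₀ with rfl | hj
    · split_ifs <;> omega
    · rw [if_neg hj, add_zero]
      exact hcount j
  · rw [Multiset.map_cons, Multiset.sum_cons]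
    linarith

end Charging

theorem Feasible.nonneg {n : ℕ} {p s : ℕ → ℝ} (hs : Feasible n p s) :
    ∀ j ∈ Finset.Icc 1 n, 0 ≤ s j :=
  fun j hj => hs.1 j (Finset.mem_Icc.1 hj).1 (Finset.mem_Icc.1 hj).2

theorem Feasible.pairwise {n : ℕ} {p s : ℕ → ℝ} (hs : Feasible n p s) :
    (Finset.Icc 1 n : Set ℕ).Pairwise fun i j => min (p i) (p j) ≤ |s i - s j| :=
  fun i hi j hj hij => hs.2 i j (Finset.mem_Icc.1 hi).1 (Finset.mem_Icc.1 hi).2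
    (Finset.mem_Icc.1 hj).1 (Finset.mem_Icc.1 hj).2 hij

theorem le_makespan {n : ℕ} (p s : ℕ → ℝ) {j : ℕ} (hj : j ∈ Finset.Icc 1 n) :
    s j + p j ≤ makespan n p s :=
  le_csSup ((Set.finite_Icc 1 n).image _).bddAbove ⟨j, by simpa using hj, rfl⟩

theorem stmt1_general (n : ℕ) (hn : 1 ≤ n) (p : ℕ → ℝ)
    (s : ℕ → ℝ) (hs : Feasible n p s)
    (T : ℝ) (hT : makespan n p s = T) :
    ∃ a : ℕ → ℕ,
      (∀ j ∈ Finset.Icc 1 n, a j ≤ 2) ∧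
      (∑ j ∈ Finset.Icc 1 n, a j) = n ∧
      (∑ j ∈ Finset.Icc 1 n, (a j : ℝ) * p j) ≤ T := by
  have hS : (Finset.Icc 1 n).Nonempty := ⟨1, Finset.mem_Icc.2 ⟨le_rfl, hn⟩⟩
  obtain ⟨M, hMS, hcount, hcard, j₀, hj₀, hsum⟩ :=
    exists_multiset_card_eq_sum_map_le hS hs.nonneg hs.pairwise
  refine ⟨fun j => M.count j, fun j _ => hcount j, ?_, ?_⟩
  · rw [sum_count_eq_card hMS, hcard, Nat.card_Icc, Nat.add_sub_cancel]
  · rw [← Multiset.sum_map_eq_sum_count_mul hMS, ← hT]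
    exact hsum.trans (le_makespan p s hj₀)

/-- for any feasible schedule with makespan `T` there are weights
`a j ∈ {0,1,2}` summing to `n` with `∑ a j * p j ≤ T`. -/
theorem stmt1 (n : ℕ) (hn : 1 ≤ n) (p : ℕ → ℝ)
    (hsort : ∀ i j, 1 ≤ i → i ≤ j → j ≤ n → p j ≤ p i)
    (hpos : ∀ i, 1 ≤ i → i ≤ n → 0 < p i)
    (s : ℕ → ℝ) (hs : Feasible n p s)
    (T : ℝ) (hT : makespan n p s = T) :
    ∃ a : ℕ → ℕ,
      (∀ j ∈ Finset.Icc 1 n, a j ≤ 2) ∧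
      (∑ j ∈ Finset.Icc 1 n, a j) = n ∧
      (∑ j ∈ Finset.Icc 1 n, (a j : ℝ) * p j) ≤ T :=
  stmt1_general n hn p s hs T hT
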